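/- arXiv:1801.07768 — 2 statements merged into one kernel-verified Lean document; each statement's English description precedes it below -/
import Mathlib

section
/- Let R be a commutative Noetherian ring and M an R-module. Then M is weakly Laskerian (i.e., Ass(M/N) is finite for every submodule N of M) if and only if M is FSF, i.e., there exists a finitely generated submodule F of M such that the support of M/F is a finite set. -/
open CategoryTheory DirectSum

universe u

/-- A module is weakly Laskerian if every quotient has finitely many associated primes. -/
def WeaklyLaskerian (R : Type u) [CommRing R] (M : Type u) [AddCommGroup M] [Module R M] : Prop :=
  ∀ N : Submodule R M, (associatedPrimes R (M ⧸ N)).Finite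

/-- `Ext^i_R(M, N)` as an object of `ModuleCat R`. -/
noncomputable def extMod (R : Type u) [CommRing R] (M N : ModuleCat.{u} R) (i : ℕ) :
    ModuleCat.{u} R :=
  ((Ext R (ModuleCat.{u} R) i).obj (Opposite.op M)).obj N

/-- The Krull dimension of a module: the Krull dimension of its support. -/
noncomputable def moduleDim (R : Type u) [CommRing R] (M : Type u) [AddCommGroup M]
    [Module R M] : WithBot ℕ∞ :=
  Order.krullDim ↥(Module.support R M)

/-- `FD_{≤ n}`: there is a finitely generated submodule whose quotient has dimension `≤ n`. -/
def FDle (R : Type u) [CommRing R] (n : ℕ) (M : Type u) [AddCommGroup M] [Module R M] : Prop :=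
  ∃ N : Submodule R M, N.FG ∧ moduleDim R (M ⧸ N) ≤ (n : WithBot ℕ∞)

/-- `a`-weakly cofinite: support in `V(a)` and all `Ext^i_R(R/a, M)` weakly Laskerian. -/
def WeaklyCofinite (R : Type u) [CommRing R] (a : Ideal R) (M : Type u) [AddCommGroup M]
    [Module R M] : Prop :=
  Module.support R M ⊆ PrimeSpectrum.zeroLocus (a : Set R) ∧
    ∀ i : ℕ, WeaklyLaskerian R (extMod R (ModuleCat.of R (R ⧸ a)) (ModuleCat.of R M) i)

/-- `M` is `a`-torsion: every element is annihilated by a power of `a`. -/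
def IsATorsion (R : Type u) [CommRing R] (a : Ideal R) (M : Type u) [AddCommGroup M]
    [Module R M] : Prop :=
  ∀ m : M, ∃ n : ℕ, ∀ r ∈ a ^ n, r • m = 0

/-- A Serre subcategory of the category of `R`-modules, as a class of modules closed under
isomorphisms, submodules, quotients and extensions. -/
structure SerreClass (R : Type u) [CommRing R] : Type (u + 1) where
  mem : ∀ (M : Type u) [AddCommGroup M] [Module R M], Prop
  mem_of_iso : ∀ (M N : Type u) [AddCommGroup M] [Module R M] [AddCommGroup N] [Module R N],
    (M ≃ₗ[R] N) → mem M → mem N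
  mem_sub : ∀ (M : Type u) [AddCommGroup M] [Module R M] (N : Submodule R M), mem M → mem N
  mem_quot : ∀ (M : Type u) [AddCommGroup M] [Module R M] (N : Submodule R M), mem M → mem (M ⧸ N)
  mem_ext : ∀ (M : Type u) [AddCommGroup M] [Module R M] (N : Submodule R M),
    mem N → mem (M ⧸ N) → mem M

/-- `f : M →ₗ[R] E` realizes `E` as an injective envelope of `M`. -/
def IsInjectiveEnvelope (R : Type u) [CommRing R] (M E : Type u) [AddCommGroup M] [Module R M]
    [AddCommGroup E] [Module R E] (f : M →ₗ[R] E) : Prop :=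
  Module.Injective R E ∧ Function.Injective f ∧
    ∀ N : Submodule R E, N ⊓ LinearMap.range f = ⊥ → N = ⊥

/-- Weakly Artinian: the injective envelope is a finite direct sum of copies of injective
envelopes of `R/m` for maximal ideals `m`. -/
def WeaklyArtinian (R : Type u) [CommRing R] (M : Type u) [AddCommGroup M] [Module R M] : Prop :=
  ∃ (n : ℕ) (m : Fin n → Ideal R), (∀ i, (m i).IsMaximal) ∧
    ∃ (E : Fin n → ModuleCat.{u} R) (f : ∀ i, (R ⧸ m i) →ₗ[R] E i)
      (g : M →ₗ[R] ⨁ i, ↥(E i)),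
      (∀ i, IsInjectiveEnvelope R (R ⧸ m i) (E i) (f i)) ∧
        IsInjectiveEnvelope R M (⨁ i, ↥(E i)) g



section Aux


open Submodule

variable {R : Type*} [CommRing R]

theorem isAssociatedPrime_iff_ann [IsNoetherianRing R] {M : Type*} [AddCommGroup M] [Module R M]
    {I : Ideal R} : IsAssociatedPrime I M ↔ I.IsPrime ∧ ∃ x : M, I = (span R {x}).annihilator := by
  have h : ∀ x : M, (⊥ : Submodule R M).colon {x} = (span R {x}).annihilator := fun x => by
    ext r
    rw [Submodule.mem_colon_singleton, Submodule.mem_bot, Submodule.mem_annihilator_span_singleton]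
  simp only [isAssociatedPrime_iff, h]

theorem isAssociatedPrime_of_mem_minimalPrimes [IsNoetherianRing R] {I p : Ideal R}
    (hp : p ∈ I.minimalPrimes) : IsAssociatedPrime p (R ⧸ I) := by
  obtain ⟨⟨hprime, hIp⟩, hmin⟩ := hp
  have hone : (1 : R) ∉ p := fun h => hprime.ne_top ((Ideal.eq_top_iff_one p).mpr h)
  -- the saturation of I at p
  set W : Ideal R := ⨆ s : {x : R // x ∉ p}, I.colon (Ideal.span {s.1}) with hW
  have hdir : Directed (· ≤ ·) fun s : {x : R // x ∉ p} => I.colon (Ideal.span {s.1}) := by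
    intro s₁ s₂
    refine ⟨⟨s₁.1 * s₂.1, fun h => ((hprime.mem_or_mem h).elim s₁.2 s₂.2)⟩, fun r hr => ?_,
      fun r hr => ?_⟩ <;> rw [Ideal.mem_colon_span_singleton] at hr ⊢
    · rw [show r * (s₁.1 * s₂.1) = r * s₁.1 * s₂.1 by ring]
      exact I.mul_mem_right _ hr
    · rw [show r * (s₁.1 * s₂.1) = r * s₂.1 * s₁.1 by ring]
      exact I.mul_mem_right _ hr
  haveI hne : Nonempty {x : R // x ∉ p} := ⟨⟨1, hone⟩⟩
  have hmemW : ∀ r : R, r ∈ W ↔ ∃ s, s ∉ p ∧ s * r ∈ I := by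
    intro r
    rw [hW, Submodule.mem_iSup_of_directed _ hdir]
    constructor
    · rintro ⟨s, hs⟩
      rw [Ideal.mem_colon_span_singleton] at hs
      exact ⟨s.1, s.2, by rwa [mul_comm]⟩
    · rintro ⟨s, hs, hsr⟩
      exact ⟨⟨s, hs⟩, Ideal.mem_colon_span_singleton.mpr (by rwa [mul_comm])⟩
  have hIW : I ≤ W := fun r hr => (hmemW r).mpr ⟨1, hone, by rwa [one_mul]⟩
  have hWp : W ≤ p := by
    intro r hr
    obtain ⟨s, hs, hsr⟩ := (hmemW r).mp hr
    rcases hprime.mem_or_mem (hIp hsr) with h | h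
    · exact absurd h hs
    · exact h
  -- p is contained in the radical of W
  have hrad : p ≤ W.radical := by
    intro a ha
    rw [Ideal.mem_radical_iff]
    by_contra hcon
    push_neg at hcon
    -- the submonoid {a^n * s}
    set T : Submonoid R :=
      { carrier := {x | ∃ n : ℕ, ∃ s, s ∉ p ∧ x = a ^ n * s}
        one_mem' := ⟨0, 1, hone, by ring⟩
        mul_mem' := by
          rintro x y ⟨n, s, hs, rfl⟩ ⟨m, s', hs', rfl⟩
          exact ⟨n + m, s * s', fun h => ((hprime.mem_or_mem h).elim hs hs'), by ring⟩ } with hT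
    have hdisj : Disjoint (I : Set R) (T : Set R) := by
      rw [Set.disjoint_left]
      rintro x hx ⟨n, s, hs, rfl⟩
      exact hcon n ((hmemW _).mpr ⟨s, hs, by rwa [mul_comm]⟩)
    obtain ⟨P, hPprime, hIP, hPdisj⟩ := Ideal.exists_le_prime_disjoint I T hdisj
    have hPp : P ≤ p := by
      intro r hr
      by_contra hrp
      exact Set.disjoint_left.mp hPdisj hr ⟨0, r, hrp, by ring⟩
    have : p ≤ P := hmin ⟨hPprime, hIP⟩ hPp
    exact Set.disjoint_left.mp hPdisj (this ha) ⟨1, 1, hone, by ring⟩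
  obtain ⟨n, hn⟩ := Ideal.exists_radical_pow_le_of_fg W (IsNoetherian.noetherian _)
  have hpn : ∃ k, p ^ k ≤ W := ⟨n, le_trans (Ideal.pow_right_mono hrad n) hn⟩
  classical
  set k := Nat.find hpn with hk
  have hkW : p ^ k ≤ W := Nat.find_spec hpn
  have hkpos : k ≠ 0 := by
    intro h0
    have : (1 : R) ∈ W := by
      have := hkW
      rw [h0, pow_zero, Ideal.one_eq_top] at this
      exact this Submodule.mem_top
    exact hone (hWp this)
  have hklt : ¬p ^ (k - 1) ≤ W := Nat.find_min hpn (Nat.sub_lt (Nat.pos_of_ne_zero hkpos) one_pos)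
  obtain ⟨cc, hcmem, hcW⟩ := SetLike.not_le_iff_exists.mp hklt
  -- every element of p multiplies cc into W
  have hpcW : ∀ b ∈ p, b * cc ∈ W := by
    intro b hb
    have : b * cc ∈ p ^ k := by
      have : p ^ k = p * p ^ (k - 1) := by
        conv_lhs => rw [← Nat.succ_pred_eq_of_pos (Nat.pos_of_ne_zero hkpos)]
        rw [pow_succ', Nat.pred_eq_sub_one]
      rw [this]
      exact Ideal.mul_mem_mul hb hcmem
    exact hkW this
  -- clear denominators using the finitely many generators of p
  obtain ⟨G, hG⟩ := IsNoetherian.noetherian p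
  have hchoice : ∀ b : R, b ∈ p → ∃ s, s ∉ p ∧ s * (b * cc) ∈ I := by
    intro b hb
    exact (hmemW _).mp (hpcW b hb)
  choose sf hsf1 hsf2 using hchoice
  set s : R := ∏ b ∈ G.attach, sf b.1 (by rw [← hG]; exact subset_span b.2) with hs
  have hsp : s ∉ p := by
    intro hsmem
    haveI := hprime
    obtain ⟨b, _, hbmem⟩ := Ideal.IsPrime.prod_mem_iff.mp hsmem
    exact hsf1 _ _ hbmem
  have hkey1 : ∀ b ∈ p, b * (s * cc) ∈ I := by
    have hspan : p ≤ I.colon (Ideal.span {s * cc}) := by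
      rw [← hG, Submodule.span_le]
      intro b hb
      rw [SetLike.mem_coe, Ideal.mem_colon_span_singleton]
      have hG' : (⟨b, hb⟩ : {x // x ∈ G}) ∈ G.attach := Finset.mem_attach _ _
      have : s = sf b (by rw [← hG]; exact subset_span hb) *
          ∏ c ∈ G.attach.erase ⟨b, hb⟩, sf c.1 (by rw [← hG]; exact subset_span c.2) := by
        rw [hs, ← Finset.mul_prod_erase _ _ hG']
      rw [show b * (s * cc) = (∏ c ∈ G.attach.erase ⟨b, hb⟩,
            sf c.1 (by rw [← hG]; exact subset_span c.2)) *
            (sf b (by rw [← hG]; exact subset_span hb) * (b * cc)) by rw [this]; ring]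
      exact I.mul_mem_left _ (hsf2 _ _)
    intro b hb
    have := hspan hb
    rwa [Ideal.mem_colon_span_singleton] at this
  have hkey2 : ∀ r : R, r * (s * cc) ∈ I → r ∈ p := by
    intro r hr
    by_contra hrp
    have hrs : r * s ∉ p := fun h => ((hprime.mem_or_mem h).elim hrp hsp)
    have : cc ∈ W := (hmemW cc).mpr ⟨r * s, hrs, by rw [show r * s * cc = r * (s * cc) by ring]; exact hr⟩
    exact hcW this
  refine isAssociatedPrime_iff_ann.mpr ⟨hprime, Submodule.Quotient.mk (s * cc), ?_⟩
  ext r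
  rw [Submodule.mem_annihilator_span_singleton, ← Submodule.Quotient.mk_smul,
    Submodule.Quotient.mk_eq_zero, smul_eq_mul]
  exact ⟨fun h => hkey1 r h, fun h => hkey2 r h⟩


open Submodule

variable {R : Type*} [CommRing R] {M : Type*} [AddCommGroup M] [Module R M]

theorem assoc_subset_union [IsNoetherianRing R] (N : Submodule R M) :
    associatedPrimes R M ⊆ associatedPrimes R N ∪ associatedPrimes R (M ⧸ N) := by
  rintro p hp0
  obtain ⟨hp, x, hx⟩ := isAssociatedPrime_iff_ann.mp hp0
  have hx' : ∀ a : R, a ∈ p ↔ a • x = 0 := fun a => by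
    rw [hx, Submodule.mem_annihilator_span_singleton]
  by_cases hc : ∃ r, r ∉ p ∧ r • x ∈ N
  · obtain ⟨r, hr, hrx⟩ := hc
    left
    refine isAssociatedPrime_iff_ann.mpr ⟨hp, ⟨r • x, hrx⟩, ?_⟩
    ext b
    rw [Submodule.mem_annihilator_span_singleton]
    have h2 : (b • (⟨r • x, hrx⟩ : N) = 0) ↔ b • (r • x) = 0 :=
      ⟨fun h => congrArg Subtype.val h, fun h => Subtype.ext h⟩
    rw [h2, smul_smul]
    constructor
    · intro hb
      rw [← hx' (b * r)]
      exact Ideal.mul_mem_right _ _ hb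
    · intro hb
      rcases hp.mem_or_mem ((hx' (b * r)).mpr hb) with h | h
      · exact h
      · exact absurd h hr
  · push_neg at hc
    right
    refine isAssociatedPrime_iff_ann.mpr ⟨hp, Submodule.Quotient.mk x, ?_⟩
    ext b
    rw [Submodule.mem_annihilator_span_singleton, ← Submodule.Quotient.mk_smul,
      Submodule.Quotient.mk_eq_zero]
    constructor
    · intro hb
      have : b • x = 0 := (hx' b).mp hb
      rw [this]
      exact N.zero_mem
    · intro hb
      by_contra hbp
      exact hbp (hc b hbp hb).elim

theorem associatedPrimes_finite_of_noetherian [IsNoetherianRing R] [Module.Finite R M] :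
    (associatedPrimes R M).Finite := by
  haveI : IsNoetherian R M := isNoetherian_of_isNoetherianRing_of_finite R M
  by_contra hinf
  have hS : {N : Submodule R M | ¬(associatedPrimes R (M ⧸ N)).Finite}.Nonempty := by
    refine ⟨⊥, fun h => hinf ?_⟩
    have e : (M ⧸ (⊥ : Submodule R M)) ≃ₗ[R] M := Submodule.quotEquivOfEqBot ⊥ rfl
    rw [← LinearEquiv.AssociatedPrimes.eq e]
    exact h
  obtain ⟨N, hN, hNmax⟩ := (set_has_maximal_iff_noetherian.mpr inferInstance) _ hS
  rcases subsingleton_or_nontrivial (M ⧸ N) with hsub | hnt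
  · exact hN (by rw [associatedPrimes.eq_empty_of_subsingleton]; exact Set.finite_empty)
  obtain ⟨p, hp⟩ := associatedPrimes.nonempty R (M ⧸ N)
  obtain ⟨hpprime, xb, hxb⟩ := isAssociatedPrime_iff_ann.mp hp
  obtain ⟨x, rfl⟩ := Submodule.Quotient.mk_surjective N xb
  have hxnotmem : x ∉ N := by
    intro hmem
    apply hpprime.ne_top
    rw [hxb, Ideal.eq_top_iff_one, Submodule.mem_annihilator_span_singleton,
      ← Submodule.Quotient.mk_smul, Submodule.Quotient.mk_eq_zero]
    simpa using hmem
  set N' : Submodule R M := N ⊔ span R {x} with hN'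
  have hNN' : N < N' := by
    rw [hN', lt_iff_le_and_ne]
    refine ⟨le_sup_left, fun h => hxnotmem ?_⟩
    rw [h]
    exact Submodule.mem_sup_right (mem_span_singleton_self x)
  -- the image of span {x} in M ⧸ N
  set Y : Submodule R (M ⧸ N) := span R {Submodule.Quotient.mk x} with hY
  have hsub1 : associatedPrimes R (M ⧸ N) ⊆
      associatedPrimes R Y ∪ associatedPrimes R ((M ⧸ N) ⧸ Y) := assoc_subset_union Y
  -- Ass Y ⊆ {p}
  have hY1 : associatedPrimes R Y ⊆ {p} := by
    rintro q hq0
    obtain ⟨hq, z, hz⟩ := isAssociatedPrime_iff_ann.mp hq0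
    obtain ⟨b, hb⟩ := mem_span_singleton.mp z.2
    have hz' : ∀ a : R, a ∈ q ↔ (a * b) • Submodule.Quotient.mk (p := N) x = 0 := by
      intro a
      rw [hz, Submodule.mem_annihilator_span_singleton]
      constructor
      · intro h
        have h0 : (a • z : M ⧸ N) = 0 := congrArg Subtype.val h
        rw [← hb, smul_smul] at h0
        exact h0
      · intro h
        apply Subtype.ext
        show a • (z : M ⧸ N) = 0
        rw [← hb, smul_smul]
        exact h
    have hp' : ∀ a : R, a ∈ p ↔ a • Submodule.Quotient.mk (p := N) x = 0 := fun a => by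
      rw [hxb, Submodule.mem_annihilator_span_singleton]
    have hbp : b ∉ p := by
      intro hbmem
      apply hq.ne_top
      rw [Ideal.eq_top_iff_one]
      rw [hz' 1, one_mul]
      exact (hp' b).mp hbmem
    have : q = p := by
      ext a
      rw [hz' a]
      constructor
      · intro h
        rcases hpprime.mem_or_mem ((hp' (a * b)).mpr h) with h' | h'
        · exact h'
        · exact absurd h' hbp
      · intro h
        exact (hp' (a * b)).mp (Ideal.mul_mem_right _ _ h)
    simp [this]
  -- (M ⧸ N) ⧸ Y ≃ M ⧸ N'
  have hmap : Submodule.map N.mkQ N' = Y := by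
    rw [hN', Submodule.map_sup, Submodule.map_span]
    rw [Submodule.mkQ_map_self, bot_sup_eq, hY]
    simp [Set.image_singleton]
  have e2 : ((M ⧸ N) ⧸ Y) ≃ₗ[R] M ⧸ N' := by
    rw [← hmap]
    exact Submodule.quotientQuotientEquivQuotient N N' le_sup_left
  have hY2 : (associatedPrimes R ((M ⧸ N) ⧸ Y)).Finite := by
    rw [LinearEquiv.AssociatedPrimes.eq e2]
    by_contra h
    exact hNmax N' h hNN'
  refine hN (Set.Finite.subset ((Set.finite_singleton p).union hY2) ?_)
  intro q hq
  rcases hsub1 hq with h | h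
  · exact Or.inl (hY1 h)
  · exact Or.inr h

theorem wl_of_fsf [IsNoetherianRing R] (F : Submodule R M) (hFG : F.FG)
    (hfin : (Module.support R (M ⧸ F)).Finite) (N : Submodule R M) :
    (associatedPrimes R (M ⧸ N)).Finite := by
  set G : Submodule R (M ⧸ N) := Submodule.map N.mkQ F with hG
  have hGfg : G.FG := hFG.map _
  haveI : Module.Finite R G := Module.Finite.iff_fg.mpr hGfg
  have h1 : associatedPrimes R (M ⧸ N) ⊆
      associatedPrimes R G ∪ associatedPrimes R ((M ⧸ N) ⧸ G) := assoc_subset_union G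
  have hGfin : (associatedPrimes R G).Finite := associatedPrimes_finite_of_noetherian
  -- (M ⧸ N) ⧸ G ≃ M ⧸ (N ⊔ F)
  have hmap : Submodule.map N.mkQ (N ⊔ F) = G := by
    rw [Submodule.map_sup, Submodule.mkQ_map_self, bot_sup_eq]
  have e2 : ((M ⧸ N) ⧸ G) ≃ₗ[R] M ⧸ (N ⊔ F) := by
    rw [← hmap]
    exact Submodule.quotientQuotientEquivQuotient N (N ⊔ F) le_sup_left
  -- surjection M ⧸ F → M ⧸ (N ⊔ F)
  have hsurj : Function.Surjective
      (Submodule.mapQ F (N ⊔ F) LinearMap.id le_sup_right : M ⧸ F →ₗ[R] M ⧸ (N ⊔ F)) := by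
    intro y
    obtain ⟨x, rfl⟩ := Submodule.Quotient.mk_surjective _ y
    exact ⟨Submodule.Quotient.mk x, rfl⟩
  have hsupp : Module.support R (M ⧸ (N ⊔ F)) ⊆ Module.support R (M ⧸ F) :=
    Module.support_subset_of_surjective _ hsurj
  have h2 : (associatedPrimes R (M ⧸ (N ⊔ F))).Finite := by
    have hsub : associatedPrimes R (M ⧸ (N ⊔ F)) ⊆
        PrimeSpectrum.asIdeal '' (Module.support R (M ⧸ (N ⊔ F))) := by
      rintro q hq0
      obtain ⟨hq, x, hx⟩ := isAssociatedPrime_iff_ann.mp hq0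
      exact ⟨⟨q, hq⟩, Module.mem_support_iff_exists_annihilator.mpr ⟨x, hx ▸ le_rfl⟩, rfl⟩
    exact Set.Finite.subset (Set.Finite.image _ (hfin.subset hsupp)) hsub
  have h3 : (associatedPrimes R ((M ⧸ N) ⧸ G)).Finite := by
    rw [LinearEquiv.AssociatedPrimes.eq e2]
    exact h2
  exact Set.Finite.subset (hGfin.union h3) h1


open Submodule

section Core

variable {R : Type*} [CommRing R] {M : Type*} [AddCommGroup M] [Module R M]

/-- Robust witness property used in the induction. -/
def RW (q : Ideal R) (F₀ : Submodule R M) (c : Ideal R) : Prop :=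
  ∀ F : Submodule R M, F.FG → F₀ ≤ F → ∃ x : M, ∃ E : Submodule R M, E.FG ∧
    (∀ r : R, r • x ∈ F ⊔ E ↔ r ∈ q) ∧ (E ⊓ F ≤ c • F) ∧ (∀ r ∈ c, r • x ∈ E)

variable (R M) in
/-- Setup data for the core construction. -/
structure CoreSetup where
  q : Ideal R
  F₀ : Submodule R M
  c : Ideal R
  hq : q.IsPrime
  hF₀ : F₀.FG
  hdag : ∀ u : R, u ∉ q → ∃ p : Ideal R, p.IsPrime ∧ q < p ∧ u ∉ p
  hrw : RW q F₀ c

variable (S : CoreSetup R M)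

/-- The property of the data chosen at each step of the construction. -/
def CoreProp (K : Submodule R M) (u : R) (z : R × Ideal R × M × Submodule R M) : Prop :=
  z.1 ∉ S.q ∧ z.2.1 ∈ (S.q ⊔ Ideal.span {z.1}).minimalPrimes ∧ u ∉ z.2.1 ∧ z.2.2.2.FG ∧
    (∀ r : R, r • z.2.2.1 ∈ K ⊔ z.2.2.2 ↔ r ∈ S.q) ∧ (z.2.2.2 ⊓ K ≤ S.c • K) ∧
    ∀ r ∈ S.c, r • z.2.2.1 ∈ z.2.2.2

theorem corePick_exists (K : Submodule R M) (u : R)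
    (hKfg : K.FG) (hK0 : S.F₀ ≤ K) (hu : u ∉ S.q) :
    ∃ z, CoreProp S K u z := by
  obtain ⟨p, hp, hqp, hup⟩ := S.hdag u hu
  obtain ⟨t, htp, htq⟩ := SetLike.exists_of_lt hqp
  have hle : S.q ⊔ Ideal.span {t} ≤ p :=
    sup_le hqp.le ((Ideal.span_le).mpr (Set.singleton_subset_iff.mpr htp))
  haveI := hp
  obtain ⟨dd, hdd, hddp⟩ := Ideal.exists_minimalPrimes_le hle
  obtain ⟨x, E, hEfg, hann, hEF, hcx⟩ := S.hrw K hKfg hK0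
  exact ⟨(t, dd, x, E), htq, hdd, fun h => hup (hddp h), hEfg, hann, hEF, hcx⟩

/-- Choice function for one step. -/
noncomputable def corePick (K : Submodule R M) (u : R) : R × Ideal R × M × Submodule R M := by
  classical
  exact if h : K.FG ∧ S.F₀ ≤ K ∧ u ∉ S.q then
    (corePick_exists S K u h.1 h.2.1 h.2.2).choose
  else (1, ⊤, 0, ⊥)

theorem corePick_spec (K : Submodule R M) (u : R)
    (hKfg : K.FG) (hK0 : S.F₀ ≤ K) (hu : u ∉ S.q) :
    CoreProp S K u (corePick S K u) := by
  classical
  rw [corePick, dif_pos ⟨hKfg, hK0, hu⟩]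
  exact (corePick_exists S K u hKfg hK0 hu).choose_spec

/-- The sequence of pairs `(Kₙ, uₙ)`. -/
noncomputable def coreKU : ℕ → Submodule R M × R
  | 0 => (S.F₀, 1)
  | n + 1 =>
      let s := coreKU n
      let z := corePick S s.1 s.2
      (s.1 ⊔ z.2.2.2 ⊔ span R {z.2.2.1}, s.2 * z.1)

noncomputable def coreK (n : ℕ) : Submodule R M := (coreKU S n).1
noncomputable def coreU (n : ℕ) : R := (coreKU S n).2
noncomputable def coreZ (n : ℕ) : R × Ideal R × M × Submodule R M :=
  corePick S (coreK S n) (coreU S n)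
noncomputable def coreT (n : ℕ) : R := (coreZ S n).1
noncomputable def coreDD (n : ℕ) : Ideal R := (coreZ S n).2.1
noncomputable def coreX (n : ℕ) : M := (coreZ S n).2.2.1
noncomputable def coreE (n : ℕ) : Submodule R M := (coreZ S n).2.2.2

theorem coreK_zero : coreK S 0 = S.F₀ := rfl
theorem coreU_zero : coreU S 0 = 1 := rfl
theorem coreK_succ (n : ℕ) :
    coreK S (n + 1) = coreK S n ⊔ coreE S n ⊔ span R {coreX S n} := rfl
theorem coreU_succ (n : ℕ) : coreU S (n + 1) = coreU S n * coreT S n := rfl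

theorem coreZ_def (n : ℕ) : coreZ S n = corePick S (coreK S n) (coreU S n) := rfl

attribute [irreducible] corePick coreKU coreK coreU coreZ

end Core

section Core2

variable {R : Type*} [CommRing R] {M : Type*} [AddCommGroup M] [Module R M]
variable [IsNoetherianRing R] (S : CoreSetup R M)

theorem coreInv (n : ℕ) : (coreK S n).FG ∧ S.F₀ ≤ coreK S n ∧ coreU S n ∉ S.q := by
  induction n with
  | zero =>
      rw [coreK_zero, coreU_zero]
      refine ⟨S.hF₀, le_rfl, fun h => S.hq.ne_top ?_⟩
      rw [Ideal.eq_top_iff_one]; exact h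
  | succ n ih =>
      obtain ⟨hfg, hle, hu⟩ := ih
      have hspec : CoreProp S (coreK S n) (coreU S n) (coreZ S n) := by
        rw [coreZ_def]
        exact corePick_spec S (coreK S n) (coreU S n) hfg hle hu
      obtain ⟨h1, h2, h3, h4, h5, h6, h7⟩ := hspec
      refine ⟨?_, ?_, ?_⟩
      · rw [coreK_succ]
        exact ((hfg.sup h4).sup (fg_span_singleton _))
      · rw [coreK_succ]
        exact hle.trans (le_sup_left.trans le_sup_left)
      · rw [coreU_succ]
        intro h
        rcases S.hq.mem_or_mem h with h | h
        · exact hu h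
        · exact h1 h

theorem coreSpec (n : ℕ) : CoreProp S (coreK S n) (coreU S n) (coreZ S n) := by
  rw [coreZ_def]
  exact corePick_spec S (coreK S n) (coreU S n) (coreInv S n).1 (coreInv S n).2.1
    (coreInv S n).2.2

theorem coreT_notq (n : ℕ) : coreT S n ∉ S.q := (coreSpec S n).1
theorem coreDD_min (n : ℕ) :
    coreDD S n ∈ (S.q ⊔ Ideal.span {coreT S n}).minimalPrimes := (coreSpec S n).2.1
theorem coreU_notDD (n : ℕ) : coreU S n ∉ coreDD S n := (coreSpec S n).2.2.1
theorem coreAnn (n : ℕ) :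
    ∀ r : R, r • coreX S n ∈ coreK S n ⊔ coreE S n ↔ r ∈ S.q := (coreSpec S n).2.2.2.2.1
theorem coreEF (n : ℕ) : coreE S n ⊓ coreK S n ≤ S.c • coreK S n := (coreSpec S n).2.2.2.2.2.1
theorem coreCX (n : ℕ) : ∀ r ∈ S.c, r • coreX S n ∈ coreE S n := (coreSpec S n).2.2.2.2.2.2

theorem coreK_mono : Monotone (coreK S) := by
  apply monotone_nat_of_le_succ
  intro n
  rw [coreK_succ]
  exact le_sup_left.trans le_sup_left

theorem coreX_memK (n : ℕ) : coreX S n ∈ coreK S (n + 1) := by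
  rw [coreK_succ]
  exact Submodule.mem_sup_right (Submodule.mem_span_singleton_self _)

theorem coreE_leK (n : ℕ) : coreE S n ≤ coreK S (n + 1) := by
  rw [coreK_succ]
  exact le_sup_right.trans le_sup_left

theorem coreU_dvd {m n : ℕ} (h : m ≤ n) : coreU S m ∣ coreU S n := by
  induction n with
  | zero => rw [Nat.le_zero.mp h]
  | succ n ih =>
      rcases Nat.lt_or_ge m (n + 1) with h' | h'
      · have := ih (Nat.lt_succ_iff.mp h')
        rw [coreU_succ]
        exact this.mul_right _
      · rw [Nat.le_antisymm h h']

theorem coreT_dvdU {m n : ℕ} (h : m < n) : coreT S m ∣ coreU S n := by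
  have h1 : coreT S m ∣ coreU S (m + 1) := by
    rw [coreU_succ]; exact Dvd.intro_left _ rfl
  exact h1.trans (coreU_dvd S h)

/-- The submodules `Dₙ` whose union is the submodule `N`. -/
noncomputable def coreDm : ℕ → Submodule R M
  | 0 => S.F₀
  | n + 1 => coreDm n ⊔ coreE S n ⊔ span R {coreU S (n + 1) • coreX S n}

theorem coreDm_zero : coreDm S 0 = S.F₀ := rfl
theorem coreDm_succ (n : ℕ) :
    coreDm S (n + 1) = coreDm S n ⊔ coreE S n ⊔ span R {coreU S (n + 1) • coreX S n} := rfl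

attribute [irreducible] coreDm

theorem coreDm_mono : Monotone (coreDm S) := by
  apply monotone_nat_of_le_succ
  intro n
  rw [coreDm_succ]
  exact le_sup_left.trans le_sup_left

theorem coreDm_leK (n : ℕ) : coreDm S n ≤ coreK S n := by
  induction n with
  | zero => rw [coreDm_zero, coreK_zero]
  | succ n ih =>
      rw [coreDm_succ, coreK_succ]
      refine sup_le (sup_le ?_ ?_) ?_
      · exact ih.trans (le_sup_left.trans le_sup_left)
      · exact le_sup_right.trans le_sup_left
      · rw [Submodule.span_singleton_le_iff_mem]
        exact Submodule.mem_sup_right (Submodule.smul_mem _ _ (Submodule.mem_span_singleton_self _))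

theorem coreMUL (n : ℕ) (w : R) (hw : ∀ j, j < n → coreU S (j + 1) ∣ w) :
    ∀ z ∈ coreK S n, w • z ∈ coreDm S n := by
  induction n with
  | zero =>
      intro z hz
      rw [coreK_zero] at hz
      rw [coreDm_zero]
      exact Submodule.smul_mem _ _ hz
  | succ n ih =>
      intro z hz
      rw [coreK_succ] at hz
      obtain ⟨y, hy, xx, hxx, rfl⟩ := Submodule.mem_sup.mp hz
      obtain ⟨zk, hzk, ze, hze, rfl⟩ := Submodule.mem_sup.mp hy
      obtain ⟨a, rfl⟩ := Submodule.mem_span_singleton.mp hxx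
      have h1 : w • zk ∈ coreDm S (n + 1) := by
        refine coreDm_mono S (Nat.le_succ n) ?_
        exact ih (fun j hj => hw j (hj.trans (Nat.lt_succ_self n))) zk hzk
      have h2 : w • ze ∈ coreDm S (n + 1) := by
        rw [coreDm_succ]
        exact Submodule.mem_sup_left (Submodule.mem_sup_right (Submodule.smul_mem _ _ hze))
      have h3 : w • (a • coreX S n) ∈ coreDm S (n + 1) := by
        obtain ⟨v, hv⟩ := hw n (Nat.lt_succ_self n)
        rw [coreDm_succ]
        refine Submodule.mem_sup_right ?_
        have heq : w • (a • coreX S n) = (a * v) • (coreU S (n + 1) • coreX S n) := by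
          rw [smul_smul, smul_smul, hv]
          ring_nf
        rw [heq]
        exact Submodule.smul_mem _ _ (Submodule.mem_span_singleton_self _)
      rw [smul_add, smul_add]
      exact Submodule.add_mem _ (Submodule.add_mem _ h1 h2) h3

theorem coreCMUL (n : ℕ) : ∀ r ∈ S.c, ∀ z ∈ coreK S n, r • z ∈ coreDm S n := by
  induction n with
  | zero =>
      intro r _ z hz
      rw [coreK_zero] at hz
      rw [coreDm_zero]
      exact Submodule.smul_mem _ _ hz
  | succ n ih =>
      intro r hr z hz
      rw [coreK_succ] at hz
      obtain ⟨y, hy, xx, hxx, rfl⟩ := Submodule.mem_sup.mp hz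
      obtain ⟨zk, hzk, ze, hze, rfl⟩ := Submodule.mem_sup.mp hy
      obtain ⟨a, rfl⟩ := Submodule.mem_span_singleton.mp hxx
      have h1 : r • zk ∈ coreDm S (n + 1) :=
        coreDm_mono S (Nat.le_succ n) (ih r hr zk hzk)
      have h2 : r • ze ∈ coreDm S (n + 1) := by
        rw [coreDm_succ]
        exact Submodule.mem_sup_left (Submodule.mem_sup_right (Submodule.smul_mem _ _ hze))
      have h3 : r • (a • coreX S n) ∈ coreDm S (n + 1) := by
        have heq : r • (a • coreX S n) = a • (r • coreX S n) := by
          rw [smul_smul, smul_smul, mul_comm]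
        rw [heq, coreDm_succ]
        exact Submodule.mem_sup_left
          (Submodule.mem_sup_right (Submodule.smul_mem _ _ (coreCX S n r hr)))
      rw [smul_add, smul_add]
      exact Submodule.add_mem _ (Submodule.add_mem _ h1 h2) h3

end Core2

section Core3

variable {R : Type*} [CommRing R] {M : Type*} [AddCommGroup M] [Module R M]
variable [IsNoetherianRing R] (S : CoreSetup R M)

theorem coreCC (n : ℕ) : ∀ i r, r • coreX S i ∈ coreDm S n →
    r ∈ S.q ⊔ Ideal.span {coreU S (i + 1)} := by
  induction n using Nat.strong_induction_on with
  | _ n IH =>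
    intro i r hr
    rcases Nat.lt_or_ge i n with hin | hin
    · -- n ≥ i + 1
      obtain ⟨m, rfl⟩ : ∃ m, n = m + 1 := ⟨n - 1, by omega⟩
      have him : i ≤ m := by omega
      rw [coreDm_succ] at hr
      obtain ⟨y, hy, xx, hxx, heq⟩ := Submodule.mem_sup.mp hr
      obtain ⟨b, hb⟩ := Submodule.mem_span_singleton.mp hxx
      rcases Nat.eq_or_lt_of_le him with rfl | hlt
      · -- n = i + 1 : base case of interest
        have h1 : (r - b * coreU S (i + 1)) • coreX S i ∈ coreK S i ⊔ coreE S i := by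
          have : (r - b * coreU S (i + 1)) • coreX S i = y := by
            rw [sub_smul, ← smul_smul, hb, ← heq]
            abel
          rw [this]
          exact (sup_le_sup_right (coreDm_leK S i) _) hy
        have h2 : r - b * coreU S (i + 1) ∈ S.q := (coreAnn S i _).mp h1
        have : r = (r - b * coreU S (i + 1)) + b * coreU S (i + 1) := by ring
        rw [this]
        exact Submodule.add_mem _ (Submodule.mem_sup_left h2)
          (Submodule.mem_sup_right (Ideal.mul_mem_left _ _ (Ideal.mem_span_singleton_self _)))
      · -- i < m
        have hxiK : r • coreX S i ∈ coreK S m :=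
          Submodule.smul_mem _ _ (coreK_mono S hlt (coreX_memK S i))
        have hbK : (b * coreU S (m + 1)) • coreX S m ∈ coreK S m ⊔ coreE S m := by
          have hy' : y ∈ coreK S m ⊔ coreE S m := (sup_le_sup_right (coreDm_leK S m) _) hy
          have : (b * coreU S (m + 1)) • coreX S m = r • coreX S i - y := by
            rw [← smul_smul, hb, ← heq]
            abel
          rw [this]
          exact Submodule.sub_mem _ (Submodule.mem_sup_left hxiK) hy'
        have hbu : b * coreU S (m + 1) ∈ S.q := (coreAnn S m _).mp hbK
        have hbq : b ∈ S.q := by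
          rcases S.hq.mem_or_mem hbu with h | h
          · exact h
          · exact absurd h (coreInv S (m + 1)).2.2
        have hbx : b • coreX S m ∈ coreK S m ⊔ coreE S m := (coreAnn S m b).mpr hbq
        obtain ⟨k, hk, e, he, hke⟩ := Submodule.mem_sup.mp hbx
        have hmemDE : r • coreX S i ∈ coreDm S m ⊔ coreE S m := by
          have h5 : coreU S (m + 1) • k ∈ coreDm S m := by
            refine coreMUL S m (coreU S (m + 1)) (fun j hj => coreU_dvd S (by omega)) k hk
          have heq2 : r • coreX S i = y + (coreU S (m + 1) • k + coreU S (m + 1) • e) := by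
            rw [← smul_add, hke]
            have : coreU S (m + 1) • (b • coreX S m) = b • coreU S (m + 1) • coreX S m := by
              rw [smul_smul, smul_smul, mul_comm]
            rw [this, hb, ← heq]
          rw [heq2]
          refine Submodule.add_mem _ hy ?_
          exact Submodule.add_mem _ (Submodule.mem_sup_left h5)
            (Submodule.mem_sup_right (Submodule.smul_mem _ _ he))
        -- absorb the E m component
        obtain ⟨z', hz', e'', he'', hze⟩ := Submodule.mem_sup.mp hmemDE
        have he''K : e'' ∈ coreE S m ⊓ coreK S m := by
          refine ⟨he'', ?_⟩
          have : e'' = r • coreX S i - z' := by rw [← hze]; abel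
          rw [this]
          exact Submodule.sub_mem _ hxiK (coreDm_leK S m hz')
        have he''D : e'' ∈ coreDm S m := by
          have h6 : e'' ∈ S.c • coreK S m := coreEF S m he''K
          have h7 : S.c • coreK S m ≤ coreDm S m :=
            Submodule.smul_le.mpr (fun r hr z hz => coreCMUL S m r hr z hz)
          exact h7 h6
        have : r • coreX S i ∈ coreDm S m := by
          rw [← hze]
          exact Submodule.add_mem _ hz' he''D
        exact IH m (Nat.lt_succ_self m) i r this
    · -- n ≤ i : everything lands in K i
      have h1 : r • coreX S i ∈ coreK S i ⊔ coreE S i := by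
        refine Submodule.mem_sup_left ?_
        exact coreK_mono S hin ((coreDm_leK S n) hr)
      exact Submodule.mem_sup_left ((coreAnn S i r).mp h1)

/-- The submodule `N` whose quotient has infinitely many associated primes. -/
noncomputable def coreN : Submodule R M := ⨆ n, coreDm S n

theorem coreN_mem {z : M} : z ∈ coreN S ↔ ∃ n, z ∈ coreDm S n :=
  Submodule.mem_iSup_of_directed _ (coreDm_mono S).directed_le

/-- The annihilator of the class of `coreX S i` in `M ⧸ coreN S`. -/
noncomputable def coreA (i : ℕ) : Ideal R :=
  (span R {Submodule.Quotient.mk (p := coreN S) (coreX S i)}).annihilator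

theorem coreA_mem (i : ℕ) (r : R) : r ∈ coreA S i ↔ r • coreX S i ∈ coreN S := by
  rw [coreA, Submodule.mem_annihilator_span_singleton, ← Submodule.Quotient.mk_smul,
    Submodule.Quotient.mk_eq_zero]

theorem coreA_le (i : ℕ) : coreA S i ≤ S.q ⊔ Ideal.span {coreU S (i + 1)} := by
  intro r hr
  obtain ⟨n, hn⟩ := (coreN_mem S).mp ((coreA_mem S i r).mp hr)
  exact coreCC S n i r hn

theorem coreA_mem_u (i : ℕ) : coreU S (i + 1) ∈ coreA S i := by
  rw [coreA_mem]
  refine (coreN_mem S).mpr ⟨i + 1, ?_⟩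
  rw [coreDm_succ]
  exact Submodule.mem_sup_right (Submodule.mem_span_singleton_self _)

theorem coreA_mem_qu (i : ℕ) : ∀ e ∈ S.q, e * coreU S i ∈ coreA S i := by
  intro e he
  rw [coreA_mem]
  have h1 : e • coreX S i ∈ coreK S i ⊔ coreE S i := (coreAnn S i e).mpr he
  obtain ⟨k, hk, e', he', hke⟩ := Submodule.mem_sup.mp h1
  have h2 : coreU S i • k ∈ coreDm S i :=
    coreMUL S i (coreU S i) (fun j hj => coreU_dvd S (by omega)) k hk
  have heq : (e * coreU S i) • coreX S i = coreU S i • k + coreU S i • e' := by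
    rw [← smul_add, hke, smul_smul, mul_comm]
  rw [heq]
  refine (coreN_mem S).mpr ⟨i + 1, ?_⟩
  rw [coreDm_succ]
  exact Submodule.add_mem _
    (Submodule.mem_sup_left (Submodule.mem_sup_left h2))
    (Submodule.mem_sup_left (Submodule.mem_sup_right (Submodule.smul_mem _ _ he')))

theorem coreDD_prime (i : ℕ) : (coreDD S i).IsPrime := (coreDD_min S i).1.1

theorem coreT_mem_DD (i : ℕ) : coreT S i ∈ coreDD S i :=
  (coreDD_min S i).1.2 (Submodule.mem_sup_right (Ideal.mem_span_singleton_self _))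

theorem coreQ_le_DD (i : ℕ) : S.q ≤ coreDD S i :=
  le_sup_left.trans (coreDD_min S i).1.2

theorem coreA_le_DD (i : ℕ) : coreA S i ≤ coreDD S i := by
  refine (coreA_le S i).trans (sup_le (coreQ_le_DD S i) ?_)
  rw [Ideal.span_singleton_le_iff_mem, coreU_succ]
  exact Ideal.mul_mem_left _ _ (coreT_mem_DD S i)

theorem coreDD_min_A (i : ℕ) : coreDD S i ∈ (coreA S i).minimalPrimes := by
  refine ⟨⟨coreDD_prime S i, coreA_le_DD S i⟩, ?_⟩
  rintro y ⟨hyprime, hay⟩ hyd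
  have huy : coreU S i ∉ y := fun h => coreU_notDD S i (hyd h)
  have hty : coreT S i ∈ y := by
    have : coreU S i * coreT S i ∈ y := by
      rw [← coreU_succ]
      exact hay (coreA_mem_u S i)
    rcases hyprime.mem_or_mem this with h | h
    · exact absurd h huy
    · exact h
  have hqy : S.q ≤ y := by
    intro e he
    rcases hyprime.mem_or_mem (hay (coreA_mem_qu S i e he)) with h | h
    · exact h
    · exact absurd h huy
  exact (coreDD_min S i).2 ⟨hyprime, sup_le hqy
    ((Ideal.span_singleton_le_iff_mem _).mpr hty)⟩ hyd

theorem coreDD_mem_ass (i : ℕ) :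
    coreDD S i ∈ associatedPrimes R (M ⧸ coreN S) := by
  have h1 : IsAssociatedPrime (coreDD S i) (R ⧸ coreA S i) :=
    isAssociatedPrime_of_mem_minimalPrimes (coreDD_min_A S i)
  have hker : ∀ r ∈ coreA S i,
      r ∈ LinearMap.ker (LinearMap.toSpanSingleton R (M ⧸ coreN S)
        (Submodule.Quotient.mk (coreX S i))) := by
    intro r hr
    rw [LinearMap.mem_ker, LinearMap.toSpanSingleton_apply, ← Submodule.Quotient.mk_smul,
      Submodule.Quotient.mk_eq_zero]
    exact (coreA_mem S i r).mp hr
  have hker' : LinearMap.ker (LinearMap.toSpanSingleton R (M ⧸ coreN S)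
      (Submodule.Quotient.mk (coreX S i))) ≤ coreA S i := by
    intro r hr
    rw [LinearMap.mem_ker, LinearMap.toSpanSingleton_apply, ← Submodule.Quotient.mk_smul,
      Submodule.Quotient.mk_eq_zero] at hr
    exact (coreA_mem S i r).mpr hr
  set φ := Submodule.liftQ (coreA S i) (LinearMap.toSpanSingleton R (M ⧸ coreN S)
      (Submodule.Quotient.mk (coreX S i))) hker with hφ
  have hinj : Function.Injective φ := by
    rw [← LinearMap.ker_eq_bot, hφ]
    exact Submodule.ker_liftQ_eq_bot _ _ _ hker'
  exact h1.map_of_injective φ hinj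

theorem coreDD_injective : Function.Injective (coreDD S) := by
  have key : ∀ i j, i < j → coreDD S i ≠ coreDD S j := by
    intro i j hij heq
    have h1 : coreT S i ∈ coreDD S j := heq ▸ coreT_mem_DD S i
    obtain ⟨w, hw⟩ := coreT_dvdU S hij
    have : coreU S j ∈ coreDD S j := by
      rw [hw]
      exact Ideal.mul_mem_right _ _ h1
    exact coreU_notDD S j this
  intro i j h
  rcases lt_trichotomy i j with h' | h' | h'
  · exact absurd h (key i j h')
  · exact h'
  · exact absurd h.symm (key j i h')

theorem core_direct (S' : CoreSetup R M) :
    ∃ N : Submodule R M, ¬(associatedPrimes R (M ⧸ N)).Finite := by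
  refine ⟨coreN S', fun hfin => ?_⟩
  exact (Set.infinite_of_injective_forall_mem (coreDD_injective S')
    (coreDD_mem_ass S')) hfin

end Core3

section Core4

variable {R : Type*} [CommRing R] {M : Type*} [AddCommGroup M] [Module R M]
variable [IsNoetherianRing R]

theorem core_main : ∀ q : Ideal R, q.IsPrime →
    ({p : PrimeSpectrum R | q ≤ p.asIdeal}).Infinite →
    ∀ (F₀ : Submodule R M) (c : Ideal R), F₀.FG → RW q F₀ c →
    ∃ N : Submodule R M, ¬(associatedPrimes R (M ⧸ N)).Finite := by
  have main : ∀ q : Ideal R,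
      (∀ q' : Ideal R, q < q' → q'.IsPrime →
        ({p : PrimeSpectrum R | q' ≤ p.asIdeal}).Infinite →
        ∀ (F₀ : Submodule R M) (c : Ideal R), F₀.FG → RW q' F₀ c →
        ∃ N : Submodule R M, ¬(associatedPrimes R (M ⧸ N)).Finite) →
      q.IsPrime → ({p : PrimeSpectrum R | q ≤ p.asIdeal}).Infinite →
      ∀ (F₀ : Submodule R M) (c : Ideal R), F₀.FG → RW q F₀ c →
      ∃ N : Submodule R M, ¬(associatedPrimes R (M ⧸ N)).Finite := by
    intro q IH hq hV F₀ c hF₀ hrw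
    by_cases hdag : ∀ u : R, u ∉ q → ∃ p : Ideal R, p.IsPrime ∧ q < p ∧ u ∉ p
    · exact core_direct ⟨q, F₀, c, hq, hF₀, hdag, hrw⟩
    · push_neg at hdag
      obtain ⟨c₀, hc₀q, hc₀⟩ := hdag
      set B : Ideal R := q ⊔ Ideal.span {c₀} with hB
      have hBfin : B.minimalPrimes.Finite := by
        rw [Ideal.minimalPrimes_eq_comap]
        exact (minimalPrimes.finite_of_isNoetherianRing (R ⧸ B)).image _
      have hcover : {p : PrimeSpectrum R | q ≤ p.asIdeal} \ {⟨q, hq⟩} ⊆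
          ⋃ d ∈ B.minimalPrimes, {p : PrimeSpectrum R | d ≤ p.asIdeal} := by
        rintro p ⟨hp1, hp2⟩
        have hlt : q < p.asIdeal := by
          refine lt_of_le_of_ne hp1 (fun h => hp2 ?_)
          have : p = ⟨q, h ▸ p.2⟩ := PrimeSpectrum.ext h.symm
          rw [this]
          rfl
        have hc₀p : c₀ ∈ p.asIdeal := hc₀ _ p.2 hlt
        have hBp : B ≤ p.asIdeal := sup_le hp1
          ((Ideal.span_singleton_le_iff_mem _).mpr hc₀p)
        haveI := p.2
        obtain ⟨d, hd, hdp⟩ := Ideal.exists_minimalPrimes_le hBp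
        exact Set.mem_biUnion hd hdp
      have hinf : ({p : PrimeSpectrum R | q ≤ p.asIdeal} \ {⟨q, hq⟩}).Infinite :=
        hV.diff (Set.finite_singleton _)
      have hexd : ∃ d ∈ B.minimalPrimes,
          {p : PrimeSpectrum R | d ≤ p.asIdeal}.Infinite := by
        by_contra hall
        push_neg at hall
        have hfin : (⋃ d ∈ B.minimalPrimes, {p : PrimeSpectrum R | d ≤ p.asIdeal}).Finite :=
          Set.Finite.biUnion hBfin (fun d hd => hall d hd)
        exact hinf (hfin.subset hcover)
      obtain ⟨d, hd, hVd⟩ := hexd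
      have hdprime : d.IsPrime := hd.1.1
      have hc₀d : c₀ ∈ d := hd.1.2 (Submodule.mem_sup_right (Ideal.mem_span_singleton_self _))
      have hqd : q < d := by
        refine lt_of_le_of_ne (le_sup_left.trans hd.1.2) (fun h => hc₀q ?_)
        rw [h]
        exact hc₀d
      -- witness r
      obtain ⟨-, zb, hzb⟩ := isAssociatedPrime_iff_ann.mp (isAssociatedPrime_of_mem_minimalPrimes hd)
      obtain ⟨r, rfl⟩ := Submodule.Quotient.mk_surjective B zb
      have hr : ∀ a : R, a * r ∈ B ↔ a ∈ d := by
        intro a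
        rw [hzb, Submodule.mem_annihilator_span_singleton, ← Submodule.Quotient.mk_smul,
          Submodule.Quotient.mk_eq_zero, smul_eq_mul]
      have hrw' : RW d F₀ (c ⊔ Ideal.span {c₀}) := by
        intro F hFfg hF0
        obtain ⟨xt, E, hEfg, hann, hEF, hcx⟩ := hrw F hFfg hF0
        refine ⟨r • xt, E ⊔ span R {c₀ • xt}, hEfg.sup (fg_span_singleton _), ?_, ?_, ?_⟩
        · intro a
          rw [← sup_assoc]
          constructor
          · intro h
            obtain ⟨g, hg, w, hw, heq⟩ := Submodule.mem_sup.mp h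
            obtain ⟨b, hb⟩ := Submodule.mem_span_singleton.mp hw
            have h1 : (a * r - b * c₀) • xt = g := by
              rw [sub_smul, ← smul_smul, ← smul_smul, hb, ← heq]
              abel
            have h2 : a * r - b * c₀ ∈ q := (hann _).mp (h1 ▸ hg)
            have h3 : a * r ∈ B := by
              have : a * r = (a * r - b * c₀) + b * c₀ := by ring
              rw [this]
              exact Submodule.add_mem _ (Submodule.mem_sup_left h2)
                (Submodule.mem_sup_right (Ideal.mul_mem_left _ _ (Ideal.mem_span_singleton_self _)))
            exact (hr a).mp h3
          · intro ha
            obtain ⟨e, he, w, hw, heq⟩ := Submodule.mem_sup.mp ((hr a).mpr ha)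
            obtain ⟨b, hb⟩ := Ideal.mem_span_singleton'.mp hw
            have : a • (r • xt) = e • xt + b • (c₀ • xt) := by
              simp only [smul_smul]
              rw [show a * r = e + b * c₀ by rw [← heq, hb], add_smul]
            rw [this]
            exact Submodule.add_mem _ (Submodule.mem_sup_left ((hann e).mpr he))
              (Submodule.mem_sup_right (Submodule.smul_mem _ _ (Submodule.mem_span_singleton_self _)))
        · rintro z ⟨hzE', hzF⟩
          obtain ⟨e, he, w, hw, heq⟩ := Submodule.mem_sup.mp hzE'
          obtain ⟨b, hb⟩ := Submodule.mem_span_singleton.mp hw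
          have h1 : (b * c₀) • xt ∈ F ⊔ E := by
            have : (b * c₀) • xt = z - e := by
              rw [← smul_smul, hb, ← heq]
              abel
            rw [this]
            exact Submodule.sub_mem _ (Submodule.mem_sup_left hzF) (Submodule.mem_sup_right he)
          have h2 : b ∈ q := by
            rcases hq.mem_or_mem ((hann _).mp h1) with h | h
            · exact h
            · exact absurd h hc₀q
          obtain ⟨f₁, hf₁, e₁, he₁, hfe⟩ := Submodule.mem_sup.mp ((hann b).mpr h2)
          have hzeq : z = (e + c₀ • e₁) + c₀ • f₁ := by
            have hbc : b • (c₀ • xt) = c₀ • f₁ + c₀ • e₁ := by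
              calc b • (c₀ • xt) = c₀ • (b • xt) := by rw [smul_smul, smul_smul, mul_comm]
                _ = c₀ • (f₁ + e₁) := by rw [← hfe]
                _ = c₀ • f₁ + c₀ • e₁ := smul_add _ _ _
            rw [← heq, ← hb, hbc]
            abel
          have hwE : e + c₀ • e₁ ∈ E ⊓ F := by
            constructor
            · exact Submodule.add_mem _ he (Submodule.smul_mem _ _ he₁)
            · have : e + c₀ • e₁ = z - c₀ • f₁ := by rw [hzeq]; abel
              rw [this]
              exact Submodule.sub_mem _ hzF (Submodule.smul_mem _ _ hf₁)
          have hwc : e + c₀ • e₁ ∈ (c ⊔ Ideal.span {c₀}) • F :=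
            Submodule.smul_mono_left le_sup_left (hEF hwE)
          have hcf : c₀ • f₁ ∈ (c ⊔ Ideal.span {c₀}) • F :=
            Submodule.smul_mono_left le_sup_right
              (Submodule.smul_mem_smul (Ideal.mem_span_singleton_self _) hf₁)
          rw [hzeq]
          exact Submodule.add_mem _ hwc hcf
        · intro a ha
          obtain ⟨e, he, w, hw, heq⟩ := Submodule.mem_sup.mp ha
          obtain ⟨b, hb⟩ := Ideal.mem_span_singleton'.mp hw
          have : a • (r • xt) = r • (e • xt) + (b * r) • (c₀ • xt) := by
            simp only [smul_smul]
            rw [show a = e + b * c₀ by rw [← heq, hb],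
              show (e + b * c₀) * r = r * e + b * r * c₀ by ring, add_smul]
          rw [this]
          exact Submodule.add_mem _ (Submodule.mem_sup_left (Submodule.smul_mem _ _ (hcx e he)))
            (Submodule.mem_sup_right (Submodule.smul_mem _ _ (Submodule.mem_span_singleton_self _)))
      exact IH d hqd hdprime hVd F₀ (c ⊔ Ideal.span {c₀}) hF₀ hrw'
  intro q
  exact (wellFounded_gt (α := Ideal R)).induction q
    (fun x ih => main x (fun q' hq' => ih q' hq'))

end Core4

section Core5

variable {R : Type*} [CommRing R] {M : Type*} [AddCommGroup M] [Module R M]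
variable [IsNoetherianRing R]

theorem fsf_of_wl (hWL : ∀ N : Submodule R M, (associatedPrimes R (M ⧸ N)).Finite) :
    ∃ F : Submodule R M, F.FG ∧ (Module.support R (M ⧸ F)).Finite := by
  by_contra hno
  push_neg at hno
  have hno' : ∀ F : Submodule R M, F.FG → ¬(Module.support R (M ⧸ F)).Finite := hno
  -- every support point dominates an associated prime
  have hdom : ∀ (F : Submodule R M) (p : PrimeSpectrum R), p ∈ Module.support R (M ⧸ F) →
      ∃ a ∈ associatedPrimes R (M ⧸ F), a ≤ p.asIdeal := by
    intro F p hp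
    obtain ⟨m, hm⟩ := Module.mem_support_iff_exists_annihilator.mp hp
    haveI := p.2
    obtain ⟨a, ha, hap⟩ := Ideal.exists_minimalPrimes_le hm
    have h1 : IsAssociatedPrime a (R ⧸ (span R {m}).annihilator) :=
      isAssociatedPrime_of_mem_minimalPrimes ha
    have hker : ∀ r ∈ (span R {m}).annihilator,
        r ∈ LinearMap.ker (LinearMap.toSpanSingleton R (M ⧸ F) m) := by
      intro r hr
      rw [LinearMap.mem_ker, LinearMap.toSpanSingleton_apply]
      exact (Submodule.mem_annihilator_span_singleton m r).mp hr
    have hker' : LinearMap.ker (LinearMap.toSpanSingleton R (M ⧸ F) m) ≤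
        (span R {m}).annihilator := by
      intro r hr
      rw [LinearMap.mem_ker, LinearMap.toSpanSingleton_apply] at hr
      exact (Submodule.mem_annihilator_span_singleton m r).mpr hr
    have hinj : Function.Injective
        (Submodule.liftQ _ (LinearMap.toSpanSingleton R (M ⧸ F) m) hker) := by
      rw [← LinearMap.ker_eq_bot]
      exact Submodule.ker_liftQ_eq_bot _ _ _ hker'
    exact ⟨a, h1.map_of_injective _ hinj, hap⟩
  -- maximal member of the family of ideals sInf (Ass (M ⧸ F))
  obtain ⟨J₀, hJ₀mem, hmax⟩ := (set_has_maximal_iff_noetherian.mpr inferInstance)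
    {I : Ideal R | ∃ F : Submodule R M, F.FG ∧ I = sInf (associatedPrimes R (M ⧸ F))}
    ⟨sInf (associatedPrimes R (M ⧸ (⊥ : Submodule R M))), ⊥, Submodule.fg_bot, rfl⟩
  obtain ⟨F₀, hF₀fg, hJ₀⟩ := hJ₀mem
  -- some associated prime of M ⧸ F₀ has infinite vanishing locus
  have hSuppSub : Module.support R (M ⧸ F₀) ⊆
      ⋃ a ∈ associatedPrimes R (M ⧸ F₀), {p : PrimeSpectrum R | a ≤ p.asIdeal} := by
    intro p hp
    obtain ⟨a, ha, hap⟩ := hdom F₀ p hp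
    exact Set.mem_biUnion ha hap
  have hexa : ∃ a ∈ associatedPrimes R (M ⧸ F₀),
      {p : PrimeSpectrum R | a ≤ p.asIdeal}.Infinite := by
    by_contra hall
    push_neg at hall
    exact (hno' F₀ hF₀fg) ((Set.Finite.biUnion (hWL F₀)
      (fun a ha => hall a ha)).subset hSuppSub)
  obtain ⟨astar, hastar, hVa⟩ := hexa
  haveI hastarprime : astar.IsPrime := hastar.isPrime
  have hJ₀le : J₀ ≤ astar := hJ₀ ▸ sInf_le hastar
  obtain ⟨q, hqmin, hqa⟩ := Ideal.exists_minimalPrimes_le hJ₀le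
  have hqprime : q.IsPrime := hqmin.1.1
  have hVq : {p : PrimeSpectrum R | q ≤ p.asIdeal}.Infinite :=
    hVa.mono (fun p hp => hqa.trans hp)
  -- q is an associated prime of M ⧸ F for every f.g. F ⊇ F₀
  have hkey : ∀ F : Submodule R M, F.FG → F₀ ≤ F → q ∈ associatedPrimes R (M ⧸ F) := by
    intro F hFfg hFle
    have hsurj : Function.Surjective
        (Submodule.mapQ F₀ F LinearMap.id hFle : M ⧸ F₀ →ₗ[R] M ⧸ F) := by
      intro y
      obtain ⟨x, rfl⟩ := Submodule.Quotient.mk_surjective F y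
      exact ⟨Submodule.Quotient.mk x, rfl⟩
    have hsub : Module.support R (M ⧸ F) ⊆ Module.support R (M ⧸ F₀) :=
      Module.support_subset_of_surjective _ hsurj
    have hJle : J₀ ≤ sInf (associatedPrimes R (M ⧸ F)) := by
      apply le_sInf
      intro aa haa
      have haaS : (⟨aa, haa.isPrime⟩ : PrimeSpectrum R) ∈ Module.support R (M ⧸ F) := by
        obtain ⟨-, x, hx⟩ := isAssociatedPrime_iff_ann.mp haa
        exact Module.mem_support_iff_exists_annihilator.mpr ⟨x, le_of_eq hx.symm⟩
      obtain ⟨a₀, ha₀, ha₀le⟩ := hdom F₀ _ (hsub haaS)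
      exact (hJ₀ ▸ sInf_le ha₀ : J₀ ≤ a₀).trans ha₀le
    have hJeq : sInf (associatedPrimes R (M ⧸ F)) = J₀ := by
      by_contra hne
      exact hmax (sInf (associatedPrimes R (M ⧸ F))) ⟨F, hFfg, rfl⟩
        (lt_of_le_of_ne hJle (Ne.symm hne))
    have hqJF : sInf (associatedPrimes R (M ⧸ F)) ≤ q := by
      rw [hJeq]
      exact hJ₀ ▸ hqmin.1.2
    have hfinq : (hWL F).toFinset.inf id ≤ q := by
      rw [Finset.inf_id_eq_sInf, Set.Finite.coe_toFinset]
      exact hqJF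
    obtain ⟨aa, haamem, haale⟩ := (Ideal.IsPrime.inf_le' hqprime).mp hfinq
    rw [Set.Finite.mem_toFinset] at haamem
    have hqaa : q ≤ aa := hqmin.2 ⟨haamem.isPrime, (hJeq ▸ sInf_le haamem : J₀ ≤ aa)⟩ haale
    have : aa = q := le_antisymm haale hqaa
    exact this ▸ haamem
  have hrw : RW q F₀ (⊥ : Ideal R) := by
    intro F hFfg hFle
    obtain ⟨-, xb, hxb⟩ := isAssociatedPrime_iff_ann.mp (hkey F hFfg hFle)
    obtain ⟨x, rfl⟩ := Submodule.Quotient.mk_surjective F xb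
    refine ⟨x, ⊥, Submodule.fg_bot, ?_, ?_, ?_⟩
    · intro r
      rw [sup_bot_eq, hxb, Submodule.mem_annihilator_span_singleton,
        ← Submodule.Quotient.mk_smul, Submodule.Quotient.mk_eq_zero]
    · rw [bot_inf_eq]
      exact bot_le
    · intro r hr
      rw [Submodule.mem_bot] at hr ⊢
      rw [hr, zero_smul]
  obtain ⟨N, hN⟩ := core_main q hqprime hVq F₀ ⊥ hF₀fg hrw
  exact hN (hWL N)

end Core5

end Aux

theorem weaklyLaskerian_iff_fsf (R : Type u) [CommRing R] [IsNoetherianRing R]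
    (M : Type u) [AddCommGroup M] [Module R M] :
    WeaklyLaskerian R M ↔
      ∃ F : Submodule R M, F.FG ∧ (Module.support R (M ⧸ F)).Finite := by
  constructor
  · intro h
    exact fsf_of_wl h
  · rintro ⟨F, hFG, hfin⟩ N
    exact wl_of_fsf F hFG hfin N
end

section
/- Let R be a commutative Noetherian ring, a an ideal of R, and M an a-torsion R-module. If (0 :_M a) = Hom_R(R/a, M) is a weakly Laskerian R-module whose support is contained in the set of maximal ideals of R, then M is weakly Laskerian. -/
open CategoryTheory DirectSum

universe u

/-- If `M` is `a`-torsion, the support of `M` is contained in the support of `(0 :_M a)`. -/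
lemma support_subset_torsionBySet {R : Type u} [CommRing R] [IsNoetherianRing R]
    (a : Ideal R) {M : Type u} [AddCommGroup M] [Module R M]
    (htor : IsATorsion R a M) :
    Module.support R M ⊆ Module.support R ↥(Submodule.torsionBySet R M ↑a) := by
  classical
  intro p hp
  rw [Module.mem_support_iff'] at hp
  obtain ⟨m, hm⟩ := hp
  obtain ⟨n, hn⟩ := htor m
  have hone : (1 : R) ∉ p.asIdeal := (Ideal.ne_top_iff_one _).mp p.isPrime.ne_top
  have hex : ∃ k : ℕ, ∃ s, s ∉ p.asIdeal ∧ ∀ r ∈ a ^ k, (s * r) • m = 0 :=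
    ⟨n, 1, hone, fun r hr => by rw [one_mul]; exact hn r hr⟩
  obtain ⟨s, hs, hsz⟩ := Nat.find_spec hex
  set k := Nat.find hex with hkdef
  have hk0 : k ≠ 0 := by
    intro h
    exact hm s hs (by simpa using hsz 1 (by rw [h, pow_zero, Ideal.one_eq_top]; exact Submodule.mem_top))
  have hkey : ∃ r ∈ a ^ (k - 1), ∀ t ∉ p.asIdeal, (t * (s * r)) • m ≠ 0 := by
    by_contra hcon
    push_neg at hcon
    choose! t ht htz using hcon
    obtain ⟨S, hS⟩ : (a ^ (k - 1)).FG := IsNoetherian.noetherian _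
    set tp : R := ∏ r ∈ S, t r with htp
    have hSsub : ∀ x ∈ S, x ∈ a ^ (k - 1) := fun x hx => by
      rw [← hS]; exact Ideal.subset_span hx
    have htpp : tp ∉ p.asIdeal := by
      intro hmem
      obtain ⟨x, hxS, hxp⟩ := Ideal.IsPrime.prod_mem_iff.mp hmem
      exact ht x (hSsub x hxS) hxp
    have hall : ∀ r ∈ a ^ (k - 1), (tp * s * r) • m = 0 := by
      rw [← hS]
      intro r hr
      refine Submodule.span_induction
        (p := fun (r : R) (_ : r ∈ Submodule.span R (↑S : Set R)) => (tp * s * r) • m = 0)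
        ?_ ?_ ?_ ?_ hr
      · intro x hx
        show (tp * s * x) • m = 0
        have hx' : x ∈ S := hx
        have h1 := htz x (hSsub x hx')
        have h2 : tp * s * x = (∏ r ∈ S.erase x, t r) * (t x * (s * x)) := by
          rw [htp, ← Finset.prod_erase_mul S t hx']; ring
        rw [h2, mul_smul, h1, smul_zero]
      · show (tp * s * 0) • m = 0
        rw [mul_zero, zero_smul]
      · intro x y _ _ hx hy
        show (tp * s * (x + y)) • m = 0
        rw [mul_add, add_smul, hx, hy, add_zero]
      · intro c x _ hx
        show (tp * s * (c • x)) • m = 0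
        have h2 : tp * s * (c • x) = c * (tp * s * x) := by
          rw [smul_eq_mul]; ring
        rw [h2, mul_smul, hx, smul_zero]
    have : Nat.find hex ≤ k - 1 :=
      Nat.find_le ⟨tp * s, fun hmem => (p.isPrime.mul_mem_iff_mem_or_mem.mp hmem).elim htpp hs,
        fun r hr => hall r hr⟩
    omega
  obtain ⟨r, hr, hrne⟩ := hkey
  have hmem : (s * r) • m ∈ Submodule.torsionBySet R M ↑a := by
    rw [Submodule.mem_torsionBySet_iff]
    rintro ⟨c, hc⟩
    have h1 : c • (s * r) • m = (s * (r * c)) • m := by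
      rw [← mul_smul]; ring_nf
    have h2 : r * c ∈ a ^ k := by
      have h3 : r * c ∈ a ^ (k - 1) * a := Ideal.mul_mem_mul hr hc
      rw [← pow_succ] at h3
      have h4 : k - 1 + 1 = k := by omega
      rwa [h4] at h3
    rw [h1]
    exact hsz _ h2
  rw [Module.mem_support_iff']
  refine ⟨⟨(s * r) • m, hmem⟩, fun u hu hzero => ?_⟩
  apply hrne u hu
  have := congrArg (Subtype.val) hzero
  simpa [mul_smul] using this

/-- If the annihilator of `y : M` has the property that every prime over it is maximal,
then every prime `q` over it is an associated prime of `M`. -/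
lemma isAssociatedPrime_of_all_maximal {R : Type u} [CommRing R] [IsNoetherianRing R]
    {M : Type u} [AddCommGroup M] [Module R M] (y : M) (q : Ideal R) (hq : q.IsPrime)
    (hJq : (R ∙ y).annihilator ≤ q)
    (hallmax : ∀ P : Ideal R, P.IsPrime → (R ∙ y).annihilator ≤ P → P.IsMaximal) :
    IsAssociatedPrime q M := by
  classical
  set J := (R ∙ y).annihilator with hJdef
  have hmin : ∀ P : Ideal R, P.IsPrime → J ≤ P → P ∈ J.minimalPrimes := by
    intro P hP hJP
    obtain ⟨W, hW, hWP⟩ := Ideal.exists_minimalPrimes_le (J := P) hJP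
    have : W = P := (hallmax W hW.1.1 hW.1.2).eq_of_le hP.ne_top hWP
    rwa [← this]
  have hfin : J.minimalPrimes.Finite := by
    rw [Ideal.minimalPrimes_eq_comap]
    exact (minimalPrimes.finite_of_isNoetherianRing (R ⧸ J)).image _
  have hqJ : q ∈ J.minimalPrimes := hmin q hq hJq
  obtain ⟨k0, hk0⟩ := Ideal.exists_radical_pow_le_of_fg J (IsNoetherian.noetherian _)
  set k := k0 + 1 with hkdef
  have hk : J.radical ^ k ≤ J := (Ideal.pow_le_pow_right (Nat.le_succ _)).trans hk0
  set F := hfin.toFinset with hFdef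
  have hqF : q ∈ F := hfin.mem_toFinset.mpr hqJ
  have hprodle : (∏ P ∈ F, P) ≤ J.radical := by
    rw [← Ideal.sInf_minimalPrimes (I := J), ← hfin.coe_toFinset, ← Finset.inf_id_eq_sInf]
    exact Ideal.prod_le_inf
  have hprod : (∏ P ∈ F, P ^ k) ≤ J := by
    rw [Finset.prod_pow]
    exact (Ideal.pow_right_mono hprodle k).trans hk
  set B : Ideal R := ∏ P ∈ F.erase q, P ^ k with hBdef
  have hqB : q ^ k * B ≤ J := by
    calc q ^ k * B = ∏ P ∈ F, P ^ k := Finset.mul_prod_erase F (fun P => P ^ k) hqF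
      _ ≤ J := hprod
  have hex2 : ∃ j, q ^ j * B ≤ J := ⟨k, hqB⟩
  obtain hspec2 := Nat.find_spec hex2
  set j := Nat.find hex2 with hjdef
  have hj0 : j ≠ 0 := by
    intro h
    rw [h, pow_zero, one_mul] at hspec2
    have hBq : B ≤ q := hspec2.trans hJq
    obtain ⟨P, hPF, hPq⟩ := (Ideal.IsPrime.prod_le hq).mp hBq
    have hPe : P ∈ F := Finset.mem_of_mem_erase hPF
    have hPJ : P ∈ J.minimalPrimes := hfin.mem_toFinset.mp hPe
    have hPle : P ≤ q := Ideal.IsPrime.le_of_pow_le (hP := hq) hPq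
    have : P = q := (hallmax P hPJ.1.1 hPJ.1.2).eq_of_le hq.ne_top hPle
    exact (Finset.ne_of_mem_erase hPF) this
  have hlt : ¬ (q ^ (j - 1) * B ≤ J) := Nat.find_min hex2 (by omega)
  obtain ⟨c, hc, hcJ⟩ := SetLike.not_le_iff_exists.mp hlt
  refine ⟨hq, c • y, ?_⟩
  have hann : q ≤ (R ∙ c • y).annihilator := by
    intro u hu
    rw [Submodule.mem_annihilator_span_singleton, ← mul_smul]
    have h1 : u * c ∈ q ^ j * B := by
      have h3 : u * c ∈ q * (q ^ (j - 1) * B) := Ideal.mul_mem_mul hu hc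
      rw [← mul_assoc, ← pow_succ'] at h3
      have h4 : j - 1 + 1 = j := by omega
      rwa [h4] at h3
    have h2 : u * c ∈ J := hspec2 h1
    rwa [hJdef, Submodule.mem_annihilator_span_singleton] at h2
  have hne : (R ∙ c • y).annihilator ≠ ⊤ := by
    intro h
    apply hcJ
    have : (1 : R) ∈ (R ∙ c • y).annihilator := h ▸ Submodule.mem_top
    rw [Submodule.mem_annihilator_span_singleton, one_smul] at this
    rw [hJdef, Submodule.mem_annihilator_span_singleton]
    exact this
  have e := ((hallmax q hq hJq).eq_of_le hne hann)
  rw [Submodule.bot_colon', ← e, hq.radical]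


theorem weaklyLaskerian_of_torsion (R : Type u) [CommRing R] [IsNoetherianRing R]
    (a : Ideal R) (M : Type u) [AddCommGroup M] [Module R M]
    (htor : IsATorsion R a M)
    (hWL : WeaklyLaskerian R ↥(Submodule.torsionBySet R M ↑a))
    (hsupp : ∀ p ∈ Module.support R ↥(Submodule.torsionBySet R M ↑a), p.asIdeal.IsMaximal) :
    WeaklyLaskerian R M := by
  classical
  intro N
  have hTfin : (associatedPrimes R ↥(Submodule.torsionBySet R M ↑a)).Finite := by
    have h := hWL ⊥
    rwa [LinearEquiv.AssociatedPrimes.eq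
      (Submodule.quotEquivOfEqBot (⊥ : Submodule R ↥(Submodule.torsionBySet R M ↑a)) rfl)] at h
  apply hTfin.subset
  rintro q ⟨hqprime, x, hx⟩
  have h1 : (⟨q, hqprime⟩ : PrimeSpectrum R) ∈ Module.support R (M ⧸ N) :=
    Module.mem_support_iff_exists_annihilator.mpr ⟨x, by show _ ≤ q; rw [hx, Submodule.bot_colon']; exact Ideal.le_radical⟩
  have h2 : (⟨q, hqprime⟩ : PrimeSpectrum R) ∈ Module.support R M :=
    Module.support_subset_of_surjective N.mkQ (Submodule.mkQ_surjective N) h1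
  have h3 : (⟨q, hqprime⟩ : PrimeSpectrum R) ∈
      Module.support R ↥(Submodule.torsionBySet R M ↑a) :=
    support_subset_torsionBySet a htor h2
  obtain ⟨y, hy⟩ := Module.mem_support_iff_exists_annihilator.mp h3
  exact isAssociatedPrime_of_all_maximal y q hqprime hy fun P hP hJP =>
    hsupp ⟨P, hP⟩ (Module.mem_support_iff_exists_annihilator.mpr ⟨y, hJP⟩)
end
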